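/- arXiv:1510.09025 — 3 statements merged into one kernel-verified Lean document; each statement's English description precedes it below -/
import Mathlib

section
/- In the directed model with k = ∞, if G contains no removable edge, then for every edge ab ∈ E the number of vertices reachable from b satisfies |R_G(b)| ≥ c. Consequently, any strongly connected component of G that has an incoming edge has full reachable set of size at least c. -/
open Relation

variable {V : Type*} [Fintype V] [DecidableEq V]

/-- Add a directed edge `u → v`. -/
def addE (G : V → V → Prop) (u v : V) : V → V → Prop :=
  fun a b => G a b ∨ (a = u ∧ b = v)

/-- Delete the directed edge `u → v`. -/
def delE (G : V → V → Prop) (u v : V) : V → V → Prop :=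
  fun a b => G a b ∧ ¬(a = u ∧ b = v)

/-- Vertices other than `v` reachable from `v` (k = ∞). -/
def reachSet (G : V → V → Prop) (v : V) : Set V :=
  {w | w ≠ v ∧ ReflTransGen G v w}

/-- Out-degree of `v`. -/
noncomputable def outdeg (G : V → V → Prop) (v : V) : ℕ :=
  {w | G v w}.ncard

/-- Utility of agent `v`: reachable vertices minus `c` per out-edge. -/
noncomputable def util (G : V → V → Prop) (c : ℝ) (v : V) : ℝ :=
  ((reachSet G v).ncard : ℝ) - c * (outdeg G v : ℝ)

/-- `u → v` is addable: it is absent and adding it strictly increases `u`'s utility. -/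
def Addable (G : V → V → Prop) (c : ℝ) (u v : V) : Prop :=
  ¬ G u v ∧ util G c u < util (addE G u v) c u

/-- `u → v` is removable: it is present and deleting it strictly increases `u`'s utility. -/
def Removable (G : V → V → Prop) (c : ℝ) (u v : V) : Prop :=
  G u v ∧ util G c u < util (delE G u v) c u

/-- `u` and `v` lie in the same strongly connected component. -/
def SameSCC (G : V → V → Prop) (u v : V) : Prop :=
  ReflTransGen G u v ∧ ReflTransGen G v u

/-- The strongly connected component of `v`. -/
def scc (G : V → V → Prop) (v : V) : Set V := {w | SameSCC G v w}

section Reachability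

variable {α : Type*} {G : α → α → Prop} {a b : α}

theorem reflTransGen_delE_or_reflTransGen {w : α} (h : ReflTransGen G a w) :
    ReflTransGen (delE G a b) a w ∨ ReflTransGen G b w := by
  induction h with
  | refl => exact Or.inl .refl
  | @tail x y _ hxy ih =>
    rcases ih with hdel | hb
    · by_cases hab : x = a ∧ y = b
      · exact Or.inr (hab.2 ▸ .refl)
      · exact Or.inl (hdel.tail ⟨hxy, hab⟩)
    · exact Or.inr (hb.tail hxy)

theorem reachSet_delE_subset : reachSet (delE G a b) a ⊆ reachSet G a :=
  fun _ ⟨hne, hw⟩ => ⟨hne, ReflTransGen.mono (fun _ _ h => h.1) _ _ hw⟩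

theorem reachSet_sdiff_reachSet_delE_subset :
    reachSet G a \ reachSet (delE G a b) a ⊆ {w | ReflTransGen G b w} := by
  rintro w ⟨⟨hne, hw⟩, hdel⟩
  exact (reflTransGen_delE_or_reflTransGen hw).resolve_left fun h => hdel ⟨hne, h⟩

theorem outdeg_eq_outdeg_delE_add_one [Finite α] (hab : G a b) :
    outdeg G a = outdeg (delE G a b) a + 1 := by
  have hout : {w | G a w} = insert b {w | delE G a b a w} := by
    ext w
    by_cases hw : w = b
    · simp [hw, hab]
    · simp [delE, hw]
  rw [outdeg, outdeg, hout, Set.ncard_insert_of_notMem (by simp [delE])]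

/-- The vertices in `reachSet G a \ reachSet (delE G a b) a` are those that `a` reaches only
through the edge `a → b`. -/
theorem util_sub_util_delE [Finite α] (hab : G a b) (c : ℝ) :
    util G c a - util (delE G a b) c a =
      ((reachSet G a \ reachSet (delE G a b) a).ncard : ℝ) - c := by
  rw [util, util, outdeg_eq_outdeg_delE_add_one hab,
    Set.cast_ncard_sdiff reachSet_delE_subset (Set.toFinite _)]
  push_cast
  ring

theorem removable_iff [Finite α] {c : ℝ} :
    Removable G c a b ↔ G a b ∧ ((reachSet G a \ reachSet (delE G a b) a).ncard : ℝ) < c := by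
  refine and_congr_right fun hab => ?_
  rw [← sub_neg, util_sub_util_delE hab, sub_neg]

theorem le_ncard_reflTransGen_of_not_removable [Finite α] {c : ℝ} (hab : G a b)
    (hnorem : ¬ Removable G c a b) :
    c ≤ (({w | ReflTransGen G b w} : Set α).ncard : ℝ) := by
  have hcost : c ≤ ((reachSet G a \ reachSet (delE G a b) a).ncard : ℝ) :=
    not_lt.mp fun h => hnorem (removable_iff.mpr ⟨hab, h⟩)
  exact hcost.trans (by exact_mod_cast Set.ncard_le_ncard reachSet_sdiff_reachSet_delE_subset)

theorem ncard_reflTransGen_le_of_reflTransGen [Finite α] {x y : α} (hxy : ReflTransGen G x y) :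
    ({w | ReflTransGen G y w} : Set α).ncard ≤ ({w | ReflTransGen G x w} : Set α).ncard :=
  Set.ncard_le_ncard fun _ hw => hxy.trans hw

end Reachability

theorem stmt4_general (G : V → V → Prop) (c : ℝ) (hnorem : ∀ u v, ¬ Removable G c u v) :
    (∀ a b, G a b → c ≤ (({w | ReflTransGen G b w} : Set V).ncard : ℝ)) ∧
    (∀ a b, G a b → ∀ x, SameSCC G b x →
      c ≤ (({w | ReflTransGen G x w} : Set V).ncard : ℝ)) := by
  have hedge : ∀ a b, G a b → c ≤ (({w | ReflTransGen G b w} : Set V).ncard : ℝ) :=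
    fun a b hab => le_ncard_reflTransGen_of_not_removable hab (hnorem a b)
  refine ⟨hedge, fun a b hab x hbx => (hedge a b hab).trans ?_⟩
  exact_mod_cast ncard_reflTransGen_le_of_reflTransGen hbx.2

/-- If `G` has no removable edge then for every edge `ab`, the set of vertices reachable
from `b` (including `b` itself) has size at least `c`; consequently any strongly connected
component with an incoming edge has reachable set of size at least `c`. -/
theorem stmt4 (G : V → V → Prop) (c : ℝ) (hc : 0 < c)
    (hnorem : ∀ u v, ¬ Removable G c u v) :
    (∀ a b, G a b → c ≤ (({w | ReflTransGen G b w} : Set V).ncard : ℝ)) ∧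
    (∀ a b, G a b → ∀ x, SameSCC G b x →
      c ≤ (({w | ReflTransGen G x w} : Set V).ncard : ℝ)) :=
  stmt4_general G c hnorem
end

section
/- In the balanced flower graph with 4 ≤ k ≤ 2√n and 1 ≤ c < ⌊k/2⌋ - 1, no vertex can strictly improve its utility by unilaterally changing its out-edge set; i.e., the balanced flower graph is stable. -/
variable {V : Type*} [Fintype V] [DecidableEq V]

/-- There is a directed path of length at most `k` from `a` to `b`. -/
def within {W : Type*} (G : W → W → Prop) : ℕ → W → W → Prop
  | 0, a, b => a = b
  | m+1, a, b => a = b ∨ ∃ w, G a w ∧ within G m w b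

/-- Vertices other than `v` reachable from `v` within distance `k`. -/
def reachK (G : V → V → Prop) (k : ℕ) (v : V) : Set V :=
  {w | w ≠ v ∧ within G k v w}

/-- Utility of `v` with distance bound `k` and per-edge cost `c`. -/
noncomputable def utilK (G : V → V → Prop) (c : ℝ) (k : ℕ) (v : V) : ℝ :=
  ((reachK G k v).ncard : ℝ) - c * (outdeg G v : ℝ)

/-- Unilateral deviation: `v` replaces its out-neighbourhood by `S`. -/
def deviateD (G : V → V → Prop) (v : V) (S : V → Prop) : V → V → Prop :=
  fun a b => if a = v then S b else G a b

/-- Edge relation of the directed cycle through the vertices of the list `M` (in order,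
wrapping around). -/
def cycEdge {W : Type*} (M : List W) (a b : W) : Prop :=
  ∃ i : Fin M.length,
    M.get i = a ∧
    M.get ⟨(i.1 + 1) % M.length,
      Nat.mod_lt _ (Nat.lt_of_le_of_lt (Nat.zero_le _) i.isLt)⟩ = b

/-- `G` is a balanced flower graph with center `u` and distance parameter `k`:
the non-center vertices are partitioned into `q = ⌈(n-1)/⌊k/2⌋⌉` petals, each a directed
cycle through the center of between `⌊k/2⌋ - 1` and `⌊k/2⌋` non-center vertices, and the
edges of `G` are exactly the petal-cycle edges. -/
def IsBalancedFlower {W : Type*} [Fintype W] (G : W → W → Prop) (k : ℕ) (u : W) : Prop :=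
  ∃ (q : ℕ) (P : Fin q → List W),
    q = (Fintype.card W - 1 + (k / 2 - 1)) / (k / 2) ∧
    (∀ i, (P i).Nodup) ∧
    (∀ i, u ∉ P i) ∧
    (∀ i j, i ≠ j → ∀ x, x ∈ P i → x ∉ P j) ∧
    (∀ x : W, x ≠ u → ∃ i, x ∈ P i) ∧
    (∀ i, k / 2 - 1 ≤ (P i).length ∧ (P i).length ≤ k / 2) ∧
    (∀ a b, G a b ↔ ∃ i, cycEdge (u :: P i) a b)


/-!
Every petal has at most `⌊k/2⌋` vertices, so each vertex reaches every other one through the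
center within `k` steps, and its utility is `n - 1` minus the cost of its out-edges. A
non-center vertex pays for one edge, and without any edge it reaches nothing. The center,
after switching to `S`, reaches only the petals that `S` meets, so it gives up at least
`⌊k/2⌋ - 1 > c` vertices for every petal it no longer pays an edge into.
-/

section Within

variable {W : Type*} {G H : W → W → Prop}

lemma within_refl (m : ℕ) (a : W) : within G m a a :=
  match m with
  | 0 => rfl
  | _ + 1 => Or.inl rfl

lemma within_of_le {m m' : ℕ} (hm : m ≤ m') {a b : W} (h : within G m a b) :
    within G m' a b := by
  induction m' generalizing m a with
  | zero => obtain rfl := Nat.le_zero.mp hm; exact h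
  | succ n ih =>
    match m, h with
    | 0, h => exact Or.inl h
    | _ + 1, Or.inl h => exact Or.inl h
    | _ + 1, Or.inr ⟨w, hw, h⟩ => exact Or.inr ⟨w, hw, ih (by omega) h⟩

lemma within_add {m m' : ℕ} {a b c : W} (h : within G m a b) (h' : within G m' b c) :
    within G (m + m') a c := by
  induction m generalizing a with
  | zero => obtain rfl : a = b := h; simpa using h'
  | succ n ih =>
    rcases h with rfl | ⟨w, hw, h⟩
    · exact within_of_le (by omega) h'
    · rw [Nat.succ_add]
      exact Or.inr ⟨w, hw, ih h⟩

lemma within_mono (hGH : ∀ a b, G a b → H a b) {m : ℕ} {a b : W} (h : within G m a b) :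
    within H m a b := by
  induction m generalizing a with
  | zero => exact h
  | succ n ih => exact h.imp id fun ⟨w, hw, h⟩ => ⟨w, hGH _ _ hw, ih h⟩

lemma mem_of_within {A : Set W} (hA : ∀ a b, a ∈ A → G a b → b ∈ A) {m : ℕ} {a b : W}
    (ha : a ∈ A) (h : within G m a b) : b ∈ A := by
  induction m generalizing a with
  | zero => exact (h : a = b) ▸ ha
  | succ n ih =>
    rcases h with rfl | ⟨w, hw, h⟩
    exacts [ha, ih (hA a w ha hw) h]

end Within

section Cycle

variable {W : Type*} {L : List W} {a b b' : W}

lemma within_cycEdge_get (L : List W) (i : Fin L.length) (d : ℕ) :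
    within (cycEdge L) d (L.get i) (L.get ⟨(i + d) % L.length, Nat.mod_lt _ i.pos⟩) := by
  induction d generalizing i with
  | zero => exact congrArg L.get (Fin.ext (Nat.mod_eq_of_lt i.isLt).symm)
  | succ n ih =>
    refine Or.inr ⟨_, ⟨i, rfl, rfl⟩, ?_⟩
    convert ih ⟨(i + 1) % L.length, Nat.mod_lt _ i.pos⟩ using 3
    simp only [Nat.mod_add_mod, Nat.add_assoc, Nat.add_comm 1 n]

lemma within_cycEdge_of_mem (ha : a ∈ L) (hb : b ∈ L) :
    within (cycEdge L) (L.length - 1) a b := by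
  obtain ⟨i, rfl⟩ := List.mem_iff_get.mp ha
  obtain ⟨j, rfl⟩ := List.mem_iff_get.mp hb
  have hd : (j + L.length - i) % L.length < L.length := Nat.mod_lt _ i.pos
  refine within_of_le (m := (j + L.length - i) % L.length) (by omega) ?_
  convert within_cycEdge_get L i ((j + L.length - i) % L.length) using 3
  rw [Nat.add_mod_mod, show i + (j + L.length - i) = j + L.length by omega, Nat.add_mod_right,
    Nat.mod_eq_of_lt j.isLt]

lemma cycEdge.left_mem (h : cycEdge L a b) : a ∈ L := by
  obtain ⟨i, rfl, -⟩ := h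
  exact L.get_mem i

lemma cycEdge.right_mem (h : cycEdge L a b) : b ∈ L := by
  obtain ⟨i, -, rfl⟩ := h
  exact L.get_mem _

lemma cycEdge.right_unique (hL : L.Nodup) (h : cycEdge L a b) (h' : cycEdge L a b') :
    b = b' := by
  obtain ⟨i, hi, rfl⟩ := h
  obtain ⟨i', hi', rfl⟩ := h'
  obtain rfl : i = i' := hL.get_inj_iff.mp (hi.trans hi'.symm)
  rfl

end Cycle

section Utility

variable {W : Type*}

lemma ncard_reachK_le [Fintype W] (G : W → W → Prop) (k : ℕ) (v : W) :
    (reachK G k v).ncard ≤ Fintype.card W - 1 := by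
  calc (reachK G k v).ncard ≤ ({v}ᶜ : Set W).ncard := Set.ncard_le_ncard fun w hw => hw.1
    _ = Fintype.card W - 1 := by
      rw [Set.ncard_compl, Set.ncard_singleton, Nat.card_eq_fintype_card]

variable {G : W → W → Prop} {k : ℕ} {v : W}

lemma ncard_reachK_of_forall_within [Fintype W] (h : ∀ w, within G k v w) :
    (reachK G k v).ncard = Fintype.card W - 1 := by
  have : reachK G k v = {v}ᶜ := by ext w; simp [reachK, h w]
  rw [this, Set.ncard_compl, Set.ncard_singleton, Nat.card_eq_fintype_card]

variable [DecidableEq W] {S : W → Prop}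

lemma reachK_deviateD_eq_empty (hS : ∀ b, ¬ S b) : reachK (deviateD G v S) k v = ∅ := by
  refine Set.eq_empty_of_forall_notMem fun w ⟨hwv, hw⟩ => hwv ?_
  refine mem_of_within (A := {v}) (fun a b ha hab => ?_) rfl hw
  rw [Set.mem_singleton_iff.mp ha, deviateD, if_pos rfl] at hab
  exact absurd hab (hS b)

lemma outdeg_deviateD_self : outdeg (deviateD G v S) v = {b | S b}.ncard := by
  simp [outdeg, deviateD]

end Utility

/-- `IsBalancedFlower` without the bounds on the number and the lengths of the petals. -/
structure IsFlower {W : Type*} (G : W → W → Prop) (u : W) {q : ℕ} (P : Fin q → List W) :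
    Prop where
  nodup : ∀ i, (P i).Nodup
  center_notMem : ∀ i, u ∉ P i
  disjoint : ∀ i j, i ≠ j → ∀ x, x ∈ P i → x ∉ P j
  exists_mem : ∀ x, x ≠ u → ∃ i, x ∈ P i
  adj_iff : ∀ a b, G a b ↔ ∃ i, cycEdge (u :: P i) a b

open Classical in
noncomputable def petalsMeeting {W : Type*} {q : ℕ} (P : Fin q → List W) (S : W → Prop) :
    Finset (Fin q) :=
  {i | ∃ x ∈ P i, S x}

@[simp]
lemma mem_petalsMeeting {W : Type*} {q : ℕ} {P : Fin q → List W} {S : W → Prop} {i : Fin q} :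
    i ∈ petalsMeeting P S ↔ ∃ x ∈ P i, S x := by
  simp [petalsMeeting]

namespace IsFlower

variable {W : Type*} {G : W → W → Prop} {u : W} {q : ℕ} {P : Fin q → List W}

lemma eq_of_mem (hF : IsFlower G u P) {i j : Fin q} {x : W} (hi : x ∈ P i) (hj : x ∈ P j) :
    i = j := by
  by_contra hij
  exact hF.disjoint i j hij x hi hj

lemma nodup_cons (hF : IsFlower G u P) (i : Fin q) : (u :: P i).Nodup :=
  List.nodup_cons.mpr ⟨hF.center_notMem i, hF.nodup i⟩

lemma eq_of_cycEdge (hF : IsFlower G u P) {i j : Fin q} {a b : W} (ha : a ∈ P i)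
    (h : cycEdge (u :: P j) a b) : j = i := by
  rcases List.mem_cons.mp h.left_mem with rfl | haj
  · exact absurd ha (hF.center_notMem i)
  · exact hF.eq_of_mem haj ha

lemma within_of_mem_cons (hF : IsFlower G u P) {i : Fin q} {a b : W} (ha : a ∈ u :: P i)
    (hb : b ∈ u :: P i) : within G (P i).length a b :=
  within_mono (fun _ _ h => (hF.adj_iff _ _).mpr ⟨i, h⟩) (within_cycEdge_of_mem ha hb)

lemma within_of_length_le (hF : IsFlower G u P) {k : ℕ} (hlen : ∀ i, (P i).length ≤ k / 2)
    (a b : W) : within G k a b := by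
  have through_center : ∀ x, within G (k / 2) x u ∧ within G (k / 2) u x := by
    intro x
    rcases eq_or_ne x u with rfl | hx
    · exact ⟨within_refl _ _, within_refl _ _⟩
    obtain ⟨i, hi⟩ := hF.exists_mem x hx
    have hi' := List.mem_cons_of_mem u hi
    exact ⟨within_of_le (hlen i) (hF.within_of_mem_cons hi' List.mem_cons_self),
      within_of_le (hlen i) (hF.within_of_mem_cons List.mem_cons_self hi')⟩
  exact within_of_le (by omega) (within_add (through_center a).1 (through_center b).2)

lemma reachK_deviateD_center_subset [DecidableEq W] (hF : IsFlower G u P) (k : ℕ)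
    (S : W → Prop) :
    reachK (deviateD G u S) k u ⊆ ⋃ i ∈ petalsMeeting P S, {x | x ∈ P i} := by
  let A : Set W := {u} ∪ ⋃ i ∈ petalsMeeting P S, {x | x ∈ P i}
  have hA : ∀ a b, a ∈ A → deviateD G u S a b → b ∈ A := by
    intro a b ha hab
    simp only [A, Set.mem_union, Set.mem_singleton_iff, Set.mem_iUnion, Set.mem_ofPred_eq,
      exists_prop, mem_petalsMeeting] at ha ⊢
    rcases ha with rfl | ⟨i, hi, ha⟩
    · rw [deviateD, if_pos rfl] at hab
      rcases eq_or_ne b a with hb | hb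
      · exact Or.inl hb
      · obtain ⟨i, hi⟩ := hF.exists_mem b hb
        exact Or.inr ⟨i, ⟨b, hi, hab⟩, hi⟩
    · rw [deviateD, if_neg fun (h : a = u) => hF.center_notMem i (h ▸ ha)] at hab
      obtain ⟨j, hj⟩ := (hF.adj_iff a b).mp hab
      obtain rfl := hF.eq_of_cycEdge ha hj
      exact (List.mem_cons.mp hj.right_mem).imp_right fun hb => ⟨j, hi, hb⟩
  intro w ⟨hwu, hw⟩
  simpa [A, hwu] using mem_of_within hA (Or.inl rfl) hw

variable [Fintype W]

lemma outdeg_le_one (hF : IsFlower G u P) {v : W} (hv : v ≠ u) : outdeg G v ≤ 1 := by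
  obtain ⟨i, hi⟩ := hF.exists_mem v hv
  refine (Set.ncard_le_one_iff_subsingleton).mpr fun b hb b' hb' => ?_
  obtain ⟨j, hj⟩ := (hF.adj_iff v b).mp hb
  obtain ⟨j', hj'⟩ := (hF.adj_iff v b').mp hb'
  obtain rfl := hF.eq_of_cycEdge hi hj
  obtain rfl := hF.eq_of_cycEdge hi hj'
  exact hj.right_unique (hF.nodup_cons _) hj'

lemma outdeg_center_le (hF : IsFlower G u P) : outdeg G u ≤ q := by
  have hunion : {b | G u b} = ⋃ i, {b | cycEdge (u :: P i) u b} := by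
    ext b; simp [hF.adj_iff]
  calc outdeg G u ≤ ∑ i, {b | cycEdge (u :: P i) u b}.ncard := by
        rw [outdeg, hunion]; exact Set.ncard_iUnion_le_of_fintype _
    _ ≤ ∑ _i : Fin q, 1 := Finset.sum_le_sum fun i _ =>
        (Set.ncard_le_one_iff_subsingleton).mpr fun _ hb _ hb' =>
          cycEdge.right_unique (hF.nodup_cons i) hb hb'
    _ = q := by simp

lemma card_petalsMeeting_le (hF : IsFlower G u P) (S : W → Prop) :
    (petalsMeeting P S).card ≤ {x | S x}.ncard := by
  classical
  rw [Set.ncard_eq_toFinset_card']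
  refine Finset.card_le_card_of_forall_subsingleton (fun i x => x ∈ P i) (fun i hi => ?_)
    fun x _ i ⟨_, hi⟩ j ⟨_, hj⟩ => hF.eq_of_mem hi hj
  obtain ⟨x, hx, hSx⟩ := mem_petalsMeeting.mp hi
  exact ⟨x, by simpa using hSx, hx⟩

lemma sum_length [DecidableEq W] (hF : IsFlower G u P) :
    ∑ i, (P i).length = Fintype.card W - 1 := by
  have hcover : Finset.univ.biUnion (fun i => (P i).toFinset) = Finset.univ.erase u := by
    ext x
    simp only [Finset.mem_biUnion, Finset.mem_univ, true_and, List.mem_toFinset,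
      Finset.mem_erase, and_true]
    exact ⟨fun ⟨i, hi⟩ hx => hF.center_notMem i (hx ▸ hi), hF.exists_mem x⟩
  have hdisj : Set.PairwiseDisjoint (Finset.univ : Finset (Fin q)) fun i => (P i).toFinset :=
    fun i _ j _ hij => Finset.disjoint_left.mpr fun x hi hj =>
      hF.disjoint i j hij x (List.mem_toFinset.mp hi) (List.mem_toFinset.mp hj)
  rw [← Finset.card_univ, ← Finset.card_erase_of_mem (Finset.mem_univ u), ← hcover,
    Finset.card_biUnion hdisj]
  exact Finset.sum_congr rfl fun i _ => (List.toFinset_card_of_nodup (hF.nodup i)).symm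

variable [DecidableEq W] {c : ℝ} {k : ℕ}

lemma utilK_deviateD_center_le (hF : IsFlower G u P) (hc0 : 0 ≤ c)
    (hc : ∀ i, c ≤ (P i).length) (hreach : ∀ w, within G k u w) (S : W → Prop) :
    utilK (deviateD G u S) c k u ≤ utilK G c k u := by
  set T := petalsMeeting P S
  have hreach' : ((reachK (deviateD G u S) k u).ncard : ℝ) ≤ ∑ i ∈ T, ((P i).length : ℝ) := by
    have hpetal : ∀ i, {x | x ∈ P i}.ncard ≤ (P i).length := fun i => by
      rw [← List.coe_toFinset, Set.ncard_coe_finset]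
      exact List.toFinset_card_le _
    exact_mod_cast ((Set.ncard_le_ncard (hF.reachK_deviateD_center_subset k S)).trans
      (T.set_ncard_biUnion_le _)).trans (Finset.sum_le_sum fun i _ => hpetal i)
  have hT : (T.card : ℝ) ≤ {x | S x}.ncard := by exact_mod_cast hF.card_petalsMeeting_le S
  have hdeg : (outdeg G u : ℝ) ≤ q := by exact_mod_cast hF.outdeg_center_le
  have hsum : ((Fintype.card W - 1 : ℕ) : ℝ) = ∑ i, ((P i).length : ℝ) := by
    exact_mod_cast hF.sum_length.symm
  rw [utilK, utilK, outdeg_deviateD_self, ncard_reachK_of_forall_within hreach, hsum]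
  calc _ ≤ ∑ i ∈ T, ((P i).length : ℝ) - c * T.card := by gcongr
    _ = ∑ i ∈ T, ((P i).length - c) := by simp [Finset.sum_sub_distrib, mul_comm]
    _ ≤ ∑ i, ((P i).length - c) :=
      Finset.sum_le_sum_of_subset_of_nonneg T.subset_univ fun i _ _ => sub_nonneg.mpr (hc i)
    _ = ∑ i, ((P i).length : ℝ) - c * q := by simp [Finset.sum_sub_distrib, mul_comm]
    _ ≤ _ := by gcongr

lemma utilK_deviateD_le_of_ne_center (hF : IsFlower G u P) (hc0 : 0 ≤ c)
    (hc : ∀ i, c ≤ (P i).length) {v : W} (hv : v ≠ u) (hreach : ∀ w, within G k v w)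
    (S : W → Prop) : utilK (deviateD G v S) c k v ≤ utilK G c k v := by
  have hdeg : c * outdeg G v ≤ c :=
    mul_le_of_le_one_right hc0 (by exact_mod_cast hF.outdeg_le_one hv)
  rw [utilK, utilK, outdeg_deviateD_self, ncard_reachK_of_forall_within hreach]
  by_cases hS : ∃ b, S b
  · have hcard : (1 : ℝ) ≤ {b | S b}.ncard := Nat.one_le_cast.mpr ((Set.ncard_pos).mpr hS)
    have hreach' : ((reachK (deviateD G v S) k v).ncard : ℝ) ≤ (Fintype.card W - 1 : ℕ) := by
      exact_mod_cast ncard_reachK_le _ k v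
    linarith [le_mul_of_one_le_right hc0 hcard]
  · push Not at hS
    obtain ⟨i, hi⟩ := hF.exists_mem v hv
    have hlen : (P i).length ≤ Fintype.card W - 1 :=
      hF.sum_length ▸ Finset.single_le_sum (f := fun i => (P i).length) (by simp)
        (Finset.mem_univ i)
    have hcn : c ≤ (Fintype.card W - 1 : ℕ) := (hc i).trans (by exact_mod_cast hlen)
    simp only [reachK_deviateD_eq_empty hS, Set.ncard_empty, hS, Set.ofPred_false]
    push_cast
    linarith

end IsFlower

theorem stmt17_general (G : V → V → Prop) (c : ℝ) (k : ℕ) (u : V)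
    (hc1 : 1 ≤ c) (hc2 : c < ((k / 2 : ℕ) : ℝ) - 1)
    (hflower : IsBalancedFlower G k u) :
    ∀ (v : V) (S : V → Prop), utilK (deviateD G v S) c k v ≤ utilK G c k v := by
  obtain ⟨q, P, -, hnd, hnotu, hdisj, hcov, hlen, hedge⟩ := hflower
  have hF : IsFlower G u P := ⟨hnd, hnotu, hdisj, hcov, hedge⟩
  have hc : ∀ i, c ≤ (P i).length := fun i => by
    have : k / 2 ≤ (P i).length + 1 := by have := (hlen i).1; omega
    have : ((k / 2 : ℕ) : ℝ) ≤ (P i).length + 1 := by exact_mod_cast this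
    linarith
  have hreach : ∀ v w, within G k v w := hF.within_of_length_le fun i => (hlen i).2
  intro v S
  rcases eq_or_ne v u with rfl | hv
  · exact hF.utilK_deviateD_center_le (by linarith) hc (hreach v) S
  · exact hF.utilK_deviateD_le_of_ne_center (by linarith) hc hv (hreach v) S

/-- For `4 ≤ k ≤ 2√n` and `1 ≤ c < ⌊k/2⌋ - 1`, the balanced flower graph is stable:
no vertex can strictly improve its utility by unilaterally changing its out-edge set. -/
theorem stmt17 (G : V → V → Prop) (c : ℝ) (k : ℕ) (u : V)
    (hn : 3 ≤ Fintype.card V) (hk : 4 ≤ k)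
    (hk2 : (k : ℝ) ≤ 2 * Real.sqrt (Fintype.card V))
    (hc1 : 1 ≤ c) (hc2 : c < ((k / 2 : ℕ) : ℝ) - 1)
    (hflower : IsBalancedFlower G k u) :
    ∀ (v : V) (S : V → Prop), utilK (deviateD G v S) c k v ≤ utilK G c k v :=
  stmt17_general G c k u hc1 hc2 hflower
end

section
/- Let G be a directed graph on n vertices that is a disjoint union (possibly with edges from one part to the other but not back) of two strongly connected 'optimal' parts of sizes a and n-a with 1 ≤ a ≤ n-1, where a strongly connected part of size m has social welfare at most m(m-1) - c·⌈(m-1)/⌊k/2⌋⌉ - c(m-1). Then for n ≥ 3, 4 ≤ k ≤ 2√n, and 1 ≤ c < ⌊k/2⌋ - 1, the total social welfare of G is strictly less than n(n-1) - c·⌈(n-1)/⌊k/2⌋⌉ - c(n-1). -/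
variable {V : Type*} [Fintype V] [DecidableEq V]

/-- `m(m-1) - c⌈(m-1)/h⌉ - c(m-1)`, the optimal welfare of a strongly connected part of
size `m` (here `⌈a/h⌉` is written `(a + h - 1)/h` in ℕ). -/
noncomputable def fwel (c : ℝ) (h m : ℕ) : ℝ :=
  (m : ℝ) * ((m : ℝ) - 1) - c * (((m - 1 + (h - 1)) / h : ℕ) : ℝ) - c * ((m : ℝ) - 1)

/-!
Merging two optimal parts of sizes `a` and `b` gains `2ab` in reachability, since
`a(a-1) + b(b-1) = (a+b)(a+b-1) - 2ab`, and costs at most `2c` in edges: `c` from the linear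
term and `c` from ceiling subadditivity, with `h = ⌊k/2⌋`: `⌈(a+b-1)/h⌉ ≤ ⌈(a-1)/h⌉ + ⌈(b-1)/h⌉ + 1`.
The bound on the complement of `A` already grants it the `ab` pairs reaching into `A`, so the
split graph falls short of the optimum by at least `ab - 2c`, which is positive because
`2c < 2(⌊k/2⌋ - 1) ≤ 2√n - 2 ≤ n - 1 ≤ ab`.
-/

namespace Nat

theorem add_add_pred_div_le (p q h : ℕ) :
    (p + q + (h - 1)) / h ≤ (p + (h - 1)) / h + (q + (h - 1)) / h := by
  rcases Nat.eq_zero_or_pos h with rfl | hh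
  · simp
  rw [Nat.div_le_iff_le_mul_add_pred hh, mul_add]
  have hp := Nat.lt_div_mul_add (a := p + (h - 1)) hh
  have hq := Nat.lt_div_mul_add (a := q + (h - 1)) hh
  rw [mul_comm] at hp hq
  omega

theorem succ_add_pred_div_le (p h : ℕ) : (p + 1 + (h - 1)) / h ≤ (p + (h - 1)) / h + 1 := by
  rcases Nat.eq_zero_or_pos h with rfl | hh
  · simp
  calc (p + 1 + (h - 1)) / h ≤ (p + (h - 1) + h) / h := Nat.div_le_div_right (by omega)
    _ = (p + (h - 1)) / h + 1 := Nat.add_div_right _ hh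

theorem add_sub_one_add_pred_div_le (h : ℕ) {a b : ℕ} (ha : 1 ≤ a) (hb : 1 ≤ b) :
    (a + b - 1 + (h - 1)) / h ≤ (a - 1 + (h - 1)) / h + (b - 1 + (h - 1)) / h + 1 := by
  have hab : a + b - 1 = a - 1 + (b - 1) + 1 := by omega
  rw [hab]
  exact (succ_add_pred_div_le _ h).trans
    (Nat.add_le_add_right (add_add_pred_div_le _ _ h) 1)

end Nat

theorem fwel_add_fwel_le {c : ℝ} (hc : 0 ≤ c) (h : ℕ) {a b : ℕ} (ha : 1 ≤ a) (hb : 1 ≤ b) :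
    fwel c h a + fwel c h b ≤ fwel c h (a + b) + 2 * c - 2 * a * b := by
  have hceil : (((a + b - 1 + (h - 1)) / h : ℕ) : ℝ)
      ≤ (((a - 1 + (h - 1)) / h : ℕ) : ℝ) + (((b - 1 + (h - 1)) / h : ℕ) : ℝ) + 1 := by
    exact_mod_cast Nat.add_sub_one_add_pred_div_le h ha hb
  simp only [fwel]
  push_cast
  linarith [mul_le_mul_of_nonneg_left hceil hc]

theorem two_mul_sub_one_le_of_le_sqrt {x y : ℝ} (hx : 0 ≤ x) (hy : y ≤ √x) :
    2 * (y - 1) ≤ x - 1 := by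
  nlinarith [sq_nonneg (√x - 1), Real.sq_sqrt hx]

theorem stmt18_general (G : V → V → Prop) (c : ℝ) (k : ℕ) (A : Finset V)
    (hk2 : (k : ℝ) ≤ 2 * Real.sqrt (Fintype.card V))
    (hc1 : 1 ≤ c) (hc2 : c < ((k / 2 : ℕ) : ℝ) - 1)
    (ha1 : 1 ≤ A.card) (ha2 : A.card ≤ Fintype.card V - 1)
    (hA : ∑ v ∈ A, utilK G c k v ≤ fwel c (k / 2) A.card)
    (hB : ∑ v ∈ Aᶜ, utilK G c k v ≤
      ((Fintype.card V : ℝ) - (A.card : ℝ)) * ((Fintype.card V : ℝ) - 1)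
        - c * (((Fintype.card V - A.card - 1 + (k / 2 - 1)) / (k / 2) : ℕ) : ℝ)
        - c * ((Fintype.card V : ℝ) - (A.card : ℝ) - 1)) :
    ∑ v : V, utilK G c k v < fwel c (k / 2) (Fintype.card V) := by
  set n := Fintype.card V
  set a := A.card
  have hb : 1 ≤ n - a := by omega
  have hab : a + (n - a) = n := by omega
  have hnR : ((n - a : ℕ) : ℝ) = n - a := Nat.cast_sub (by omega)
  -- the `Aᶜ`-part is an optimal part of size `n - a` whose vertices may also reach all of `A`
  have hB' : ∑ v ∈ Aᶜ, utilK G c k v ≤ fwel c (k / 2) (n - a) + a * (n - a : ℕ) := by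
    rw [fwel, hnR]
    linarith
  have hmerge := fwel_add_fwel_le (zero_le_one.trans hc1) (k / 2) ha1 hb
  rw [hab] at hmerge
  have hhalf : ((k / 2 : ℕ) : ℝ) ≤ √n := by
    have : ((2 * (k / 2) : ℕ) : ℝ) ≤ k := by exact_mod_cast Nat.mul_div_le k 2
    push_cast at this
    linarith
  have hsize : (n : ℝ) - 1 ≤ a * (n - a : ℕ) := by
    have haR : (1 : ℝ) ≤ a := by exact_mod_cast ha1
    have hbR : (1 : ℝ) ≤ (n - a : ℕ) := by exact_mod_cast hb
    nlinarith [mul_nonneg (sub_nonneg.2 haR) (sub_nonneg.2 hbR)]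
  have hcost := two_mul_sub_one_le_of_le_sqrt (Nat.cast_nonneg n) hhalf
  calc ∑ v : V, utilK G c k v = ∑ v ∈ A, utilK G c k v + ∑ v ∈ Aᶜ, utilK G c k v :=
        (Finset.sum_add_sum_compl A _).symm
    _ ≤ fwel c (k / 2) a + (fwel c (k / 2) (n - a) + a * (n - a : ℕ)) := add_le_add hA hB'
    _ < fwel c (k / 2) n := by linarith

/-- If `G` splits into a part `A` of size `a` (with `1 ≤ a ≤ n-1`) and its complement,
where the welfare of the `A`-part is at most `fwel c ⌊k/2⌋ a` and the welfare of the other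
part (which may reach into `A`) is at most `(n-a)(n-1) - c⌈(n-a-1)/⌊k/2⌋⌉ - c(n-a-1)`, then
for `n ≥ 3`, `4 ≤ k ≤ 2√n`, `1 ≤ c < ⌊k/2⌋ - 1`, the total social welfare of `G` is
strictly less than `n(n-1) - c⌈(n-1)/⌊k/2⌋⌉ - c(n-1)`. -/
theorem stmt18 (G : V → V → Prop) (c : ℝ) (k : ℕ) (A : Finset V)
    (hn : 3 ≤ Fintype.card V) (hk : 4 ≤ k)
    (hk2 : (k : ℝ) ≤ 2 * Real.sqrt (Fintype.card V))
    (hc1 : 1 ≤ c) (hc2 : c < ((k / 2 : ℕ) : ℝ) - 1)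
    (ha1 : 1 ≤ A.card) (ha2 : A.card ≤ Fintype.card V - 1)
    (hA : ∑ v ∈ A, utilK G c k v ≤ fwel c (k / 2) A.card)
    (hB : ∑ v ∈ Aᶜ, utilK G c k v ≤
      ((Fintype.card V : ℝ) - (A.card : ℝ)) * ((Fintype.card V : ℝ) - 1)
        - c * (((Fintype.card V - A.card - 1 + (k / 2 - 1)) / (k / 2) : ℕ) : ℝ)
        - c * ((Fintype.card V : ℝ) - (A.card : ℝ) - 1)) :
    ∑ v : V, utilK G c k v < fwel c (k / 2) (Fintype.card V) :=
  stmt18_general G c k A hk2 hc1 hc2 ha1 ha2 hA hB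
end
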